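/- arXiv:1811.02070 — 2 statements merged into one kernel-verified Lean document; each statement's English description precedes it below -/
import Mathlib

section
/- There exists a numerical constant C₂ > 0 such that for every positive integer N, every r, r_j ∈ [0,1]^2, and all m,m',n,n' ∈ {0,1}, the Frobenius norm satisfies ‖R^{(m',n')}_{(m,n)}(r,r_j)‖_F ≤ (C₂/√L)·(2πN)^{m+m'+n+n'}. -/
open MeasureTheory ProbabilityTheory Matrix

noncomputable section

namespace Blind2D

/-- `L = 2N+1` as a real number. -/
def Lr (N : ℕ) : ℝ := 2 * N + 1

/-- Index set `{-N, …, N}` encoded as `Fin (2N+1)`. -/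
abbrev Idx (N : ℕ) := Fin (2 * N + 1)

/-- the integer in `{-N,…,N}` corresponding to an index. -/
def toZ (N : ℕ) (i : Idx N) : ℤ := (i : ℤ) - (N : ℤ)

/-- the real number corresponding to an index. -/
def tv (N : ℕ) (i : Idx N) : ℝ := (toZ N i : ℝ)

/-- `e^{i 2π x}` for real `x`. -/
def e2 (x : ℝ) : ℂ := Complex.exp (Complex.I * (2 * Real.pi * x))

/-- `q`-th derivative of the Dirichlet kernel `D_N`. -/
def dirichletD (N : ℕ) (q : ℕ) (t : ℝ) : ℂ :=
  (Lr N : ℂ)⁻¹ * ∑ r : Idx N, (Complex.I * (2 * Real.pi * tv N r)) ^ q * e2 (t * tv N r)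

/-- the Dirichlet kernel `D_N(t) = (1/L) ∑_{r=-N}^N e^{i2πtr}`. -/
def dirichlet (N : ℕ) (t : ℝ) : ℂ := dirichletD N 0 t

/-- partial derivative `∂_τ^{m'} ∂_f^{n'}` of the atom `a(r)`,
entry `(k,l)`:  `(-1)^{m'+n'} D_N^{(m')}(l/L - τ) D_N^{(n')}(k/L - f)`. -/
def atomD (N : ℕ) (m' n' : ℕ) (r : ℝ × ℝ) : Idx N × Idx N → ℂ :=
  fun kl => (-1 : ℂ) ^ (m' + n') *
    dirichletD N m' (tv N kl.2 / Lr N - r.1) * dirichletD N n' (tv N kl.1 / Lr N - r.2)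

/-- the atom `a(r)`, with `[a(r)]_{(k,l)} = D_N(l/L-τ) D_N(k/L-f)`. -/
def atom (N : ℕ) (r : ℝ × ℝ) : Idx N × Idx N → ℂ := atomD N 0 0 r

/-- the matrix `D̃_p`, with row `(k,l)` equal to `e^{i2πpk/L} d_{p-l}^H`. -/
def Dtil (N K : ℕ) (d : ℤ → Fin K → ℂ) (p : Idx N) :
    Matrix (Idx N × Idx N) (Fin K) ℂ :=
  Matrix.of fun kl j => e2 (tv N p * tv N kl.1 / Lr N) * star (d (toZ N p - toZ N kl.2) j)

/-- the `i`-th column `d̂_i` of `D = [d_{-N},…,d_N]^H`. -/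
def dhat (N K : ℕ) (d : ℤ → Fin K → ℂ) (i : Fin K) : Idx N → ℂ :=
  fun l => star (d (toZ N l) i)

/-- `L`-periodicity of the family `d`. -/
def Periodic (N : ℕ) {K : ℕ} (d : ℤ → Fin K → ℂ) : Prop :=
  ∀ l : ℤ, d (l + (2 * N + 1 : ℤ)) = d l

/-- Euclidean (`ℓ²`) norm of a finite complex vector. -/
def enorm2 {ι : Type} [Fintype ι] (v : ι → ℂ) : ℝ := Real.sqrt (∑ i, ‖v i‖ ^ 2)

/-- spectral norm (operator norm with respect to Euclidean norms). -/
def specNorm {ι κ : Type} [Fintype ι] [Fintype κ] (A : Matrix ι κ ℂ) : ℝ :=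
  sSup {x : ℝ | ∃ v : κ → ℂ, enorm2 v ≤ 1 ∧ x = enorm2 (A.mulVec v)}

/-- Frobenius norm. -/
def frobNorm {ι κ : Type} [Fintype ι] [Fintype κ] (A : Matrix ι κ ℂ) : ℝ :=
  Real.sqrt (∑ i, ∑ j, ‖A i j‖ ^ 2)

/-- the square `[0,1]²`. -/
def box : Set (ℝ × ℝ) := Set.Icc (0 : ℝ) 1 ×ˢ Set.Icc (0 : ℝ) 1

/-- `sign(c) = c / |c|`. -/
def csign (c : ℂ) : ℂ := c / ((‖c‖ : ℝ) : ℂ)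

/-- the rank-one atom `h a(r)^H`. -/
def outerAtom (N K : ℕ) (h : Fin K → ℂ) (r : ℝ × ℝ) :
    Matrix (Fin K) (Idx N × Idx N) ℂ :=
  Matrix.of fun i kl => h i * star (atom N r kl)

/-- the atomic norm `‖U‖_A`. -/
def atomicNorm (N K : ℕ) (U : Matrix (Fin K) (Idx N × Idx N) ℂ) : ℝ :=
  sInf {t : ℝ | ∃ (n : ℕ) (c : Fin n → ℂ) (rs : Fin n → ℝ × ℝ) (hs : Fin n → Fin K → ℂ),
    (∀ i, rs i ∈ box) ∧ (∀ i, enorm2 (hs i) = 1) ∧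
    U = ∑ i, c i • outerAtom N K (hs i) (rs i) ∧ t = ∑ i, ‖c i‖}

/-- the ground-truth matrix `U = ∑_j c_j h_j a(r_j)^H`. -/
def Umat (N K R : ℕ) (c : Fin R → ℂ) (h : Fin R → Fin K → ℂ) (rr : Fin R → ℝ × ℝ) :
    Matrix (Fin K) (Idx N × Idx N) ℂ :=
  ∑ j, c j • outerAtom N K (h j) (rr j)

/-- feasibility for problem `P₁`: `Ũ` has the same measurements as `U`. -/
def Feasible (N K : ℕ) (d : ℤ → Fin K → ℂ)
    (U Ut : Matrix (Fin K) (Idx N × Idx N) ℂ) : Prop :=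
  ∀ p : Idx N, (Dtil N K d p * Ut).trace = (Dtil N K d p * U).trace

/-- wrap-around distance on the unit circle. -/
def wrapDist (x y : ℝ) : ℝ := min (Int.fract (x - y)) (1 - Int.fract (x - y))

/-- wrap-around sup-distance on `[0,1)²`. -/
def wrapSup (r s : ℝ × ℝ) : ℝ := max (wrapDist r.1 s.1) (wrapDist r.2 s.2)

/-- the minimum-separation condition. -/
def MinSep (N R : ℕ) (rr : Fin R → ℝ × ℝ) : Prop :=
  Function.Injective rr ∧ ∀ j j', j ≠ j' → 2.38 / N ≤ wrapSup (rr j) (rr j')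

/-- `T = N/2 + 1`. -/
def Tnum (N : ℕ) : ℝ := (N : ℝ) / 2 + 1

/-- `T = N/2 + 1` as an integer. -/
def TnumZ (N : ℕ) : ℤ := (N : ℤ) / 2 + 1

/-- Fourier coefficients of the squared Fejér kernel. -/
def gcoef (N : ℕ) (n : ℤ) : ℝ :=
  (Tnum N)⁻¹ * ∑ l ∈ Finset.Icc (max (n - TnumZ N) (-TnumZ N)) (min (n + TnumZ N) (TnumZ N)),
    (1 - |(l : ℝ)| / Tnum N) * (1 - |(n : ℝ) - (l : ℝ)| / Tnum N)

/-- the squared Fejér kernel. -/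
def Fejer (N : ℕ) (t : ℝ) : ℝ :=
  (Real.sin (Tnum N * Real.pi * t) / (Tnum N * Real.sin (Real.pi * t))) ^ 4

/-- `a`-th derivative of the squared Fejér kernel. -/
def FejerD (N : ℕ) (a : ℕ) : ℝ → ℝ := iteratedDeriv a (Fejer N)

/-- `μ = √|F''(0)|`. -/
def mu (N : ℕ) : ℝ := Real.sqrt |FejerD N 2 0|

/-- the vector `z_p(r_j)_{(m,n)}`. -/
def zvec (N : ℕ) (m n : ℕ) (p : Idx N) (rj : ℝ × ℝ) : Idx N × Idx N → ℂ :=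
  fun kl =>
    (gcoef N (toZ N kl.1) : ℂ) * (Complex.I * (2 * Real.pi * tv N kl.1)) ^ m *
      ((gcoef N (toZ N p) : ℂ) * (Complex.I * (2 * Real.pi * tv N p)) ^ n) *
      e2 (tv N kl.1 * (tv N p + tv N kl.2) / Lr N) *
      e2 (-(tv N kl.1 * rj.1 + tv N p * rj.2))

/-- the random kernel matrix `M^{(m',n')}_{(m,n)}(r, r_j)` (with `m' = n' = 0` this is
`M_{(m,n)}(r,r_j) = (1/T²) ∑_p D̃_p^H a(r) z_p(r_j)_{(m,n)}^H D̃_p`, and the parameters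
`m', n'` give its partial derivatives in `r = (τ,f)`). -/
def Mker (N K : ℕ) (d : ℤ → Fin K → ℂ) (m n m' n' : ℕ) (r rj : ℝ × ℝ) :
    Matrix (Fin K) (Fin K) ℂ :=
  ((Tnum N : ℂ) ^ 2)⁻¹ •
    ∑ p : Idx N,
      Matrix.vecMulVec ((Dtil N K d p)ᴴ.mulVec (atomD N m' n' r))
        (Matrix.vecMul (star (zvec N m n p rj)) (Dtil N K d p))

/-- the deterministic matrix `R^{(m',n')}_{(m,n)}(r, r_j)`. -/
def Rmat (N : ℕ) (m n m' n' : ℕ) (r rj : ℝ × ℝ) : Matrix (Idx N) (Idx N) ℂ :=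
  Matrix.of fun l l' =>
    (Lr N : ℂ)⁻¹ * ∑ p : Idx N, ((Tnum N : ℂ) ^ 2)⁻¹ *
      ∑ k : Idx N, ∑ k' : Idx N,
        (gcoef N (toZ N k') : ℂ) * (-(Complex.I * (2 * Real.pi * tv N k'))) ^ m *
          (-(Complex.I * (2 * Real.pi * tv N k))) ^ m' *
          (gcoef N (toZ N p) : ℂ) * (-(Complex.I * (2 * Real.pi * tv N p))) ^ (n + n') *
          e2 (tv N k * (tv N p - tv N l) / Lr N) *
          e2 (-(tv N k' * (tv N p - tv N l') / Lr N)) *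
          e2 (-(tv N k * r.1 - tv N k' * rj.1)) *
          e2 (-(tv N p * (r.2 - rj.2)))

/-- derivative pairs indexing the three block rows/columns: `(0,0), (1,0), (0,1)`. -/
def mnF : Fin 3 → ℕ × ℕ := ![(0, 0), (1, 0), (0, 1)]

/-- block signs `+1, -1, -1`. -/
def sgnF : Fin 3 → ℂ := ![1, -1, -1]

/-- total derivative order of a block index. -/
def wtF (i : Fin 3) : ℕ := (mnF i).1 + (mnF i).2

/-- the `3RK × 3RK` interpolation matrix `E`. -/
def Emat (N K R : ℕ) (d : ℤ → Fin K → ℂ) (rr : Fin R → ℝ × ℝ) :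
    Matrix (Fin 3 × Fin R × Fin K) (Fin 3 × Fin R × Fin K) ℂ :=
  Matrix.of fun a b =>
    sgnF a.1 * ((mu N : ℂ) ^ (wtF a.1 + wtF b.1))⁻¹ *
      Mker N K d (mnF b.1).1 (mnF b.1).2 (mnF a.1).1 (mnF a.1).2 (rr a.2.1) (rr b.2.1)
        a.2.2 b.2.2

/-- `M̄^{(a,b)}(r) = F^{(a)}(τ) F^{(b)}(f)`. -/
def Mbar (N : ℕ) (a b : ℕ) (r : ℝ × ℝ) : ℂ := ((FejerD N a r.1 * FejerD N b r.2 : ℝ) : ℂ)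

/-- the `3R × 3R` deterministic matrix `E̅`. -/
def Ebar (N R : ℕ) (rr : Fin R → ℝ × ℝ) : Matrix (Fin 3 × Fin R) (Fin 3 × Fin R) ℂ :=
  Matrix.of fun a b =>
    sgnF a.1 * ((mu N : ℂ) ^ (wtF a.1 + wtF b.1))⁻¹ *
      Mbar N ((mnF a.1).1 + (mnF b.1).1) ((mnF a.1).2 + (mnF b.1).2) (rr a.2 - rr b.2)

/-- `E̅ ⊗ I_K`. -/
def EbarKron (N K R : ℕ) (rr : Fin R → ℝ × ℝ) :
    Matrix (Fin 3 × Fin R × Fin K) (Fin 3 × Fin R × Fin K) ℂ :=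
  Matrix.of fun a b =>
    Ebar N R rr (a.1, a.2.1) (b.1, b.2.1) * (if a.2.2 = b.2.2 then 1 else 0)

/-- the `3RK × K` matrix `T^{(m',n')}(r)`. -/
def Tmat (N K R : ℕ) (d : ℤ → Fin K → ℂ) (rr : Fin R → ℝ × ℝ) (m' n' : ℕ) (r : ℝ × ℝ) :
    Matrix (Fin 3 × Fin R × Fin K) (Fin K) ℂ :=
  Matrix.of fun a k =>
    ((mu N : ℂ) ^ (m' + n' + wtF a.1))⁻¹ *
      star (Mker N K d (mnF a.1).1 (mnF a.1).2 m' n' r (rr a.2.1) k a.2.2)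

/-- `L_mat`: the first `RK` columns of `E⁻¹`. -/
def Lmat (N K R : ℕ) (d : ℤ → Fin K → ℂ) (rr : Fin R → ℝ × ℝ) :
    Matrix (Fin 3 × Fin R × Fin K) (Fin R × Fin K) ℂ :=
  Matrix.of fun a b => (Emat N K R d rr)⁻¹ a (0, b.1, b.2)

/-- `L̄ ⊗ I_K`, where `L̄` consists of the first `R` columns of `E̅⁻¹`. -/
def LbarKron (N K R : ℕ) (rr : Fin R → ℝ × ℝ) :
    Matrix (Fin 3 × Fin R × Fin K) (Fin R × Fin K) ℂ :=
  Matrix.of fun a b => (Ebar N R rr)⁻¹ (a.1, a.2.1) (0, b.1) * (if a.2.2 = b.2 then 1 else 0)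

/-- the stacked vector `h = (sign(c_1) h_1; …; sign(c_R) h_R)`. -/
def hvec (K R : ℕ) (c : Fin R → ℂ) (h : Fin R → Fin K → ℂ) : Fin R × Fin K → ℂ :=
  fun b => csign (c b.1) * h b.1 b.2

/-- the vector `(h; 0_{RK}; 0_{RK})`. -/
def hfull (K R : ℕ) (c : Fin R → ℂ) (h : Fin R → Fin K → ℂ) :
    Fin 3 × Fin R × Fin K → ℂ :=
  fun a => if a.1 = 0 then csign (c a.2.1) * h a.2.1 a.2.2 else 0

/-- the dual polynomial `f^{(m',n')}(r)`, built from the coefficients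
`(α; μβ; μγ) = E⁻¹ (h; 0; 0)`. -/
def fpoly (N K R : ℕ) (d : ℤ → Fin K → ℂ) (rr : Fin R → ℝ × ℝ)
    (c : Fin R → ℂ) (h : Fin R → Fin K → ℂ) (m' n' : ℕ) (r : ℝ × ℝ) : Fin K → ℂ :=
  fun k => ∑ a : Fin 3 × Fin R × Fin K,
    Mker N K d (mnF a.1).1 (mnF a.1).2 m' n' r (rr a.2.1) k a.2.2 *
      ((mu N : ℂ) ^ (wtF a.1))⁻¹ *
      (Emat N K R d rr)⁻¹.mulVec (hfull K R c h) a

/-- the deterministic polynomial `f̄^{(m',n')}(r)`, built from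
`(ᾱ; μβ̄; μγ̄) = (E̅ ⊗ I_K)⁻¹ (h; 0; 0)`. -/
def fbar (N K R : ℕ) (rr : Fin R → ℝ × ℝ)
    (c : Fin R → ℂ) (h : Fin R → Fin K → ℂ) (m' n' : ℕ) (r : ℝ × ℝ) : Fin K → ℂ :=
  fun k => ∑ i : Fin 3, ∑ j : Fin R,
    Mbar N (m' + (mnF i).1) (n' + (mnF i).2) (r - rr j) *
      ((mu N : ℂ) ^ (wtF i))⁻¹ *
      (EbarKron N K R rr)⁻¹.mulVec (hfull K R c h) (i, j, k)

/-- the vector polynomial `f(r) = ∑_p q_p D̃_p^H a(r)`. -/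
def fq (N K : ℕ) (d : ℤ → Fin K → ℂ) (q : Idx N → ℂ) (r : ℝ × ℝ) : Fin K → ℂ :=
  fun k => ∑ p : Idx N, q p * (Dtil N K d p)ᴴ.mulVec (atom N r) k

/-- the matrix with rows `a(r)^H D̃_p`, `p = -N,…,N`. -/
def Bmat (N K : ℕ) (d : ℤ → Fin K → ℂ) (r : ℝ × ℝ) : Matrix (Idx N) (Fin K) ℂ :=
  Matrix.of fun p k => Matrix.vecMul (star (atom N r)) (Dtil N K d p) k

section Probabilistic

variable {Ω : Type} [MeasureSpace Ω]

/-- Assumption A1. -/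
def A1 (N K : ℕ) (d : Ω → ℤ → Fin K → ℂ) : Prop :=
  (∀ ω, Periodic N (d ω)) ∧
  iIndepFun (fun (l : Idx N) (ω : Ω) => d ω (toZ N l)) ℙ ∧
  (∀ l : Idx N, iIndepFun (fun (j : Fin K) (ω : Ω) => d ω (toZ N l) j) ℙ) ∧
  (∀ (l : Idx N) (j : Fin K),
    IndepFun (fun ω => (d ω (toZ N l) j).re) (fun ω => (d ω (toZ N l) j).im) ℙ) ∧
  (∀ (l : Idx N) (j : Fin K), ∫ ω, d ω (toZ N l) j ∂ℙ = 0) ∧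
  (∀ (l : Idx N) (j j' : Fin K),
    ∫ ω, d ω (toZ N l) j * star (d ω (toZ N l) j') ∂ℙ = if j = j' then 1 else 0)

/-- Assumption A2 (`K̃`-concentration of the columns of `D`). -/
def A2 (N K : ℕ) (Kt : ℝ) (d : Ω → ℤ → Fin K → ℂ) : Prop :=
  1 ≤ Kt ∧ ∃ Cc1 Cc2 : ℝ, 0 < Cc1 ∧ 0 < Cc2 ∧
    ∀ (i : Fin K) (φ : EuclideanSpace ℂ (Idx N) → ℝ), LipschitzWith 1 φ →
      ∀ t : ℝ, 0 < t →
        ℙ {ω | t ≤ |φ ((WithLp.equiv 2 (Idx N → ℂ)).symm (dhat N K (d ω) i)) -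
            ∫ ω', φ ((WithLp.equiv 2 (Idx N → ℂ)).symm (dhat N K (d ω') i)) ∂ℙ|} ≤
          ENNReal.ofReal (Cc1 * Real.exp (-Cc2 * t ^ 2 / Kt ^ 2))

/-- Assumption A3 (`h_j` i.i.d. uniform on the complex unit sphere, independent of `d`). -/
def A3 (K R : ℕ) (d : Ω → ℤ → Fin K → ℂ) (h : Ω → Fin R → Fin K → ℂ) : Prop :=
  (∀ ω j, enorm2 (h ω j) = 1) ∧
  iIndepFun (fun (j : Fin R) (ω : Ω) => h ω j) ℙ ∧
  (∀ j j' : Fin R, Measure.map (fun ω => h ω j) ℙ = Measure.map (fun ω => h ω j') ℙ) ∧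
  (∀ (j : Fin R) (U : (Fin K → ℂ) →ₗ[ℂ] (Fin K → ℂ)), (∀ v, enorm2 (U v) = enorm2 v) →
    Measure.map (fun ω => U (h ω j)) ℙ = Measure.map (fun ω => h ω j) ℙ) ∧
  IndepFun d h ℙ

/-- entrywise expectation of the random kernel matrix. -/
def MkerExp (N K : ℕ) (d : Ω → ℤ → Fin K → ℂ) (m n m' n' : ℕ) (r rj : ℝ × ℝ) :
    Matrix (Fin K) (Fin K) ℂ :=
  Matrix.of fun i j => ∫ ω, Mker N K (d ω) m n m' n' r rj i j ∂ℙ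

/-- entrywise expectation of `T^{(m',n')}(r)`. -/
def TmatExp (N K R : ℕ) (d : Ω → ℤ → Fin K → ℂ) (rr : Fin R → ℝ × ℝ)
    (m' n' : ℕ) (r : ℝ × ℝ) : Matrix (Fin 3 × Fin R × Fin K) (Fin K) ℂ :=
  Matrix.of fun a k => ∫ ω, Tmat N K R (d ω) rr m' n' r a k ∂ℙ

end Probabilistic

end Blind2D
namespace Blind2D

/-! Since `e^{i2πk(p-l)/L} e^{-i2πk'(p-l')/L} = e^{i2πp(k-k')/L} e^{-i2πkl/L} e^{i2πk'l'/L}`,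
`R` is the two-dimensional DFT in `(l, l')` of the array `C = Rcoef`,
`C_{kk'} = (LT²)⁻¹ (-i2πk)^{m'} e^{-i2πkτ} · g_{k'} (-i2πk')^m e^{i2πk'τ_j} · S_{kk'}`
with `S = corr`, `S_{kk'} = ∑_p P_p e^{i2πp(k-k')/L}`, and `P = pcoef`,
`P_p = g_p (-i2πp)^{n+n'} e^{-i2πp(f-f_j)}`.
On `{-N,…,N}` the DFT is `√L` times a unitary map, so `‖R‖_F² = L² ∑ |C_{kk'}|²`, and a
second Parseval identity gives `∑_{k'} |S_{kk'}|² = L ∑_p |P_p|²`. With `|g_n| ≤ 3` and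
`|2πk| ≤ 2πN` this yields `‖R‖_F² ≤ 81 L³ T⁻⁴ (2πN)^{2(m+m'+n+n')}`, and `L ≤ 4T` turns this
into `(144 / √L)² (2πN)^{2(m+m'+n+n')}`.
-/

lemma e2_add (x y : ℝ) : e2 (x + y) = e2 x * e2 y := by
  simp only [e2, ← Complex.exp_add]
  congr 1
  push_cast
  ring

lemma norm_e2 (x : ℝ) : ‖e2 x‖ = 1 := by
  rw [e2, Complex.norm_exp]
  simp

lemma conj_e2 (x : ℝ) : starRingEnd ℂ (e2 x) = e2 (-x) := by
  rw [e2, ← Complex.exp_conj]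
  simp [e2, map_ofNat]

lemma e2_eq_one_iff (x : ℝ) : e2 x = 1 ↔ ∃ n : ℤ, x = n := by
  rw [e2, Complex.exp_eq_one_iff]
  refine exists_congr fun n => ⟨fun h => ?_, fun h => ?_⟩
  · have h' := congrArg Complex.im h
    simp only [Complex.mul_im, Complex.I_re, Complex.mul_re, Complex.re_ofNat, Complex.ofReal_re,
      Complex.im_ofNat, Complex.ofReal_im, mul_zero, sub_zero, zero_mul, add_zero, Complex.I_im,
      one_mul, zero_add, Complex.intCast_re, mul_one, Complex.intCast_im, sub_self] at h'
    exact mul_left_cancel₀ Real.two_pi_pos.ne' (by linarith)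
  · rw [h]; push_cast; ring

lemma e2_intCast (n : ℤ) : e2 n = 1 := (e2_eq_one_iff _).2 ⟨n, rfl⟩

lemma e2_neg (x : ℝ) : e2 (-x) = (e2 x)⁻¹ := by
  refine eq_inv_of_mul_eq_one_left ?_
  rw [← e2_add, neg_add_cancel]
  exact_mod_cast e2_intCast 0

lemma e2_sub (x y : ℝ) : e2 (x - y) = e2 x * (e2 y)⁻¹ := by
  rw [sub_eq_add_neg, e2_add, e2_neg]

lemma e2_pow (x : ℝ) (n : ℕ) : e2 x ^ n = e2 (n * x) := by
  induction n with
  | zero => simpa using (e2_intCast 0).symm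
  | succ n ih =>
    rw [pow_succ, ih, ← e2_add]
    congr 1
    push_cast
    ring

lemma Lr_pos (N : ℕ) : 0 < Lr N := by unfold Lr; positivity

lemma card_Idx (N : ℕ) : (Fintype.card (Idx N) : ℝ) = Lr N := by
  simp [Lr]

lemma one_le_Tnum (N : ℕ) : 1 ≤ Tnum N := by
  unfold Tnum
  linarith [show (0 : ℝ) ≤ N / 2 by positivity]

lemma Tnum_pos (N : ℕ) : 0 < Tnum N := one_pos.trans_le (one_le_Tnum N)

lemma TnumZ_le_Tnum (N : ℕ) : (TnumZ N : ℝ) ≤ Tnum N := by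
  have h : ((N / 2 : ℕ) : ℝ) ≤ (N : ℝ) / 2 := Nat.cast_div_le
  have hZ : (N : ℤ) / 2 = ((N / 2 : ℕ) : ℤ) := by omega
  have hcast : (TnumZ N : ℝ) = ((N / 2 : ℕ) : ℝ) + 1 := by
    rw [TnumZ, hZ]
    norm_cast
  rw [hcast, Tnum]
  linarith

lemma Lr_le_four_mul_Tnum (N : ℕ) : Lr N ≤ 4 * Tnum N := by
  unfold Lr Tnum
  linarith

lemma toZ_injective_mod (N : ℕ) {k k' : Idx N} (h : (2 * N + 1 : ℤ) ∣ toZ N k - toZ N k') :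
    k = k' := by
  have hlt : |toZ N k - toZ N k'| < 2 * N + 1 := by
    simp only [toZ, abs_lt]
    omega
  have := Int.eq_zero_of_abs_lt_dvd h hlt
  simp only [toZ] at this
  exact Fin.ext (by omega)

lemma neg_toZ_injective_mod (N : ℕ) {k k' : Idx N}
    (h : (2 * N + 1 : ℤ) ∣ -toZ N k - -toZ N k') : k = k' :=
  (toZ_injective_mod N (by rwa [neg_sub_neg] at h)).symm

lemma sum_e2_mul_tv (N : ℕ) (j : ℤ) :
    ∑ l : Idx N, e2 (j * tv N l / Lr N) = if (2 * N + 1 : ℤ) ∣ j then (Lr N : ℂ) else 0 := by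
  have hL : Lr N ≠ 0 := (Lr_pos N).ne'
  split_ifs with hj
  · obtain ⟨q, rfl⟩ := hj
    have hterm : ∀ l : Idx N, e2 ((((2 * N + 1) * q : ℤ) : ℝ) * tv N l / Lr N) = 1 := fun l => by
      rw [← e2_intCast (q * toZ N l)]
      congr 1
      simp only [Lr, tv] at hL ⊢
      push_cast
      field_simp
    rw [Finset.sum_congr rfl fun l _ => hterm l]
    simp [Lr]
  · set ζ := e2 (j / Lr N)
    have hζ : ζ ≠ 1 := by
      rintro h
      obtain ⟨q, hq⟩ := (e2_eq_one_iff _).1 h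
      rw [div_eq_iff hL, Lr] at hq
      exact hj ⟨q, by exact_mod_cast hq.trans (mul_comm _ _)⟩
    have hζL : ζ ^ (2 * N + 1) = 1 := by
      rw [e2_pow, ← e2_intCast j]
      congr 1
      simp only [Lr] at hL ⊢
      push_cast
      field_simp
    have hterm : ∀ l : Idx N, e2 (j * tv N l / Lr N) = e2 (-(j * N / Lr N)) * ζ ^ (l : ℕ) := by
      intro l
      rw [e2_pow, ← e2_add]
      congr 1
      simp only [tv, toZ]
      push_cast
      ring
    rw [Finset.sum_congr rfl fun l _ => hterm l, ← Finset.mul_sum,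
      Fin.sum_univ_eq_sum_range (ζ ^ ·), geom_sum_eq hζ, hζL]
    simp

lemma sum_norm_sq_sum_mul_e2 (N : ℕ) (c : Idx N → ℂ) (d : Idx N → ℤ)
    (hd : ∀ k k', (2 * N + 1 : ℤ) ∣ d k - d k' → k = k') :
    ∑ l : Idx N, ‖∑ k, c k * e2 (d k * tv N l / Lr N)‖ ^ 2 = Lr N * ∑ k, ‖c k‖ ^ 2 := by
  have hpair : ∀ k k', ∑ l : Idx N, c k * e2 (d k * tv N l / Lr N) *
      (starRingEnd ℂ (c k') * starRingEnd ℂ (e2 (d k' * tv N l / Lr N)))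
      = if k = k' then (Lr N : ℂ) * (c k * starRingEnd ℂ (c k')) else 0 := by
    intro k k'
    have hdvd : (2 * N + 1 : ℤ) ∣ d k - d k' ↔ k = k' :=
      ⟨hd k k', fun h => by simp [h]⟩
    rw [← if_congr hdvd rfl rfl, ← ite_zero_mul, ← sum_e2_mul_tv, Finset.sum_mul]
    refine Finset.sum_congr rfl fun l _ => ?_
    rw [conj_e2, mul_mul_mul_comm, ← e2_add, mul_comm]
    congr 2
    push_cast
    ring
  apply Complex.ofReal_injective
  push_cast
  simp_rw [← Complex.mul_conj', map_sum, Finset.sum_mul_sum, Finset.mul_sum]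
  rw [Finset.sum_comm]
  refine Finset.sum_congr rfl fun k _ => ?_
  rw [Finset.sum_comm]
  simp [hpair]

lemma sum_sum_norm_sq_dft2 (N : ℕ) (X : Idx N → Idx N → ℂ) :
    ∑ l : Idx N, ∑ l' : Idx N,
      ‖∑ k, (∑ k', X k k' * e2 (toZ N k' * tv N l' / Lr N)) *
        e2 ((-toZ N k : ℤ) * tv N l / Lr N)‖ ^ 2
      = Lr N ^ 2 * ∑ k, ∑ k', ‖X k k'‖ ^ 2 := by
  rw [Finset.sum_comm]
  simp_rw [sum_norm_sq_sum_mul_e2 N _ (fun k => -toZ N k)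
    (fun k k' => neg_toZ_injective_mod N)]
  rw [← Finset.mul_sum, Finset.sum_comm]
  simp_rw [sum_norm_sq_sum_mul_e2 N _ (toZ N) (fun k k' => toZ_injective_mod N)]
  rw [← Finset.mul_sum]
  ring

lemma abs_one_sub_abs_div_le_one {a T : ℝ} (hT : 0 < T) (ha : |a| ≤ T) :
    |1 - |a| / T| ≤ 1 := by
  have h1 : |a| / T ≤ 1 := (div_le_one hT).2 ha
  have h0 : 0 ≤ |a| / T := by positivity
  rw [abs_le]
  constructor <;> linarith

lemma abs_gcoef_le (N : ℕ) (n : ℤ) : |gcoef N n| ≤ 3 := by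
  set s := Finset.Icc (max (n - TnumZ N) (-TnumZ N)) (min (n + TnumZ N) (TnumZ N))
  have hT := Tnum_pos N
  have hTZ := TnumZ_le_Tnum N
  have hterm : ∀ l ∈ s, |(1 - |(l : ℝ)| / Tnum N) * (1 - |(n : ℝ) - l| / Tnum N)| ≤ 1 := by
    intro l hl
    simp only [s, Finset.mem_Icc, max_le_iff, le_min_iff] at hl
    have hl1 : |(l : ℝ)| ≤ Tnum N := by
      refine le_trans ?_ hTZ
      rw [← Int.cast_abs, Int.cast_le, abs_le]
      omega
    have hl2 : |(n : ℝ) - l| ≤ Tnum N := by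
      refine le_trans ?_ hTZ
      rw [← Int.cast_sub, ← Int.cast_abs, Int.cast_le, abs_le]
      omega
    rw [abs_mul]
    exact mul_le_one₀ (abs_one_sub_abs_div_le_one hT hl1) (abs_nonneg _)
      (abs_one_sub_abs_div_le_one hT hl2)
  have hcard : (s.card : ℝ) ≤ 3 * Tnum N := by
    have hsub : s ⊆ Finset.Icc (-TnumZ N) (TnumZ N) :=
      Finset.Icc_subset_Icc (le_max_right _ _) (min_le_right _ _)
    have hTZ0 : 0 ≤ TnumZ N := by unfold TnumZ; omega
    have h : (s.card : ℤ) ≤ 2 * TnumZ N + 1 := by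
      have h1 := Finset.card_le_card hsub
      rw [Int.card_Icc (-TnumZ N)] at h1
      omega
    have h' : (s.card : ℝ) ≤ 2 * TnumZ N + 1 := by exact_mod_cast h
    linarith [one_le_Tnum N]
  calc |gcoef N n|
      ≤ (Tnum N)⁻¹ * ∑ l ∈ s, |(1 - |(l : ℝ)| / Tnum N) * (1 - |(n : ℝ) - l| / Tnum N)| := by
        rw [gcoef, abs_mul, abs_inv, abs_of_pos hT]
        gcongr
        exact Finset.abs_sum_le_sum_abs _ _
    _ ≤ (Tnum N)⁻¹ * (3 * Tnum N) := by
        gcongr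
        exact (Finset.sum_le_card_nsmul _ _ 1 hterm).trans (by simpa using hcard)
    _ = 3 := by field_simp

def dweight (N a : ℕ) (k : Idx N) : ℂ := (-(Complex.I * (2 * Real.pi * tv N k))) ^ a

lemma norm_dweight_le (N a : ℕ) (k : Idx N) : ‖dweight N a k‖ ≤ (2 * Real.pi * N) ^ a := by
  have hk : |tv N k| ≤ N := by
    have hk : |toZ N k| ≤ N := by
      simp only [toZ, abs_le]
      omega
    rw [tv, ← Int.cast_abs]
    exact_mod_cast hk
  rw [dweight, norm_pow]
  gcongr
  simp only [norm_neg, norm_mul, Complex.norm_I, Complex.norm_ofNat, Complex.norm_real,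
    Real.norm_eq_abs, abs_of_pos Real.pi_pos, one_mul]
  gcongr

def pcoef (N a : ℕ) (x : ℝ) (p : Idx N) : ℂ :=
  gcoef N (toZ N p) * dweight N a p * e2 (-(tv N p * x))

lemma norm_pcoef_le (N a : ℕ) (x : ℝ) (p : Idx N) :
    ‖pcoef N a x p‖ ≤ 3 * (2 * Real.pi * N) ^ a := by
  rw [pcoef, norm_mul, norm_mul, norm_e2, mul_one, Complex.norm_real, Real.norm_eq_abs]
  exact mul_le_mul (abs_gcoef_le N _) (norm_dweight_le N a p) (norm_nonneg _) (by norm_num)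

def corr (N a : ℕ) (x : ℝ) (k k' : Idx N) : ℂ :=
  ∑ p, pcoef N a x p * e2 (tv N p * tv N k / Lr N) * e2 ((-toZ N p : ℤ) * tv N k' / Lr N)

lemma sum_norm_sq_corr (N a : ℕ) (x : ℝ) (k : Idx N) :
    ∑ k', ‖corr N a x k k'‖ ^ 2 = Lr N * ∑ p, ‖pcoef N a x p‖ ^ 2 := by
  simp only [corr]
  rw [sum_norm_sq_sum_mul_e2 N _ (fun p => -toZ N p) (fun p p' => neg_toZ_injective_mod N)]
  simp only [norm_mul, norm_e2, mul_one]

def Rcoef (N m n m' n' : ℕ) (r rj : ℝ × ℝ) (k k' : Idx N) : ℂ :=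
  ((Lr N : ℂ) * (Tnum N : ℂ) ^ 2)⁻¹ * (dweight N m' k * e2 (-(tv N k * r.1))) *
    (gcoef N (toZ N k') * dweight N m k' * e2 (tv N k' * rj.1)) *
    corr N (n + n') (r.2 - rj.2) k k'

lemma Rmat_apply_eq_dft2 (N m n m' n' : ℕ) (r rj : ℝ × ℝ) (l l' : Idx N) :
    Rmat N m n m' n' r rj l l' = ∑ k, (∑ k', Rcoef N m n m' n' r rj k k' *
      e2 (toZ N k' * tv N l' / Lr N)) * e2 ((-toZ N k : ℤ) * tv N l / Lr N) := by
  simp only [Rmat, Matrix.of_apply, Rcoef, corr, Finset.mul_sum, Finset.sum_mul]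
  rw [Finset.sum_comm]
  refine Finset.sum_congr rfl fun k _ => ?_
  rw [Finset.sum_comm]
  refine Finset.sum_congr rfl fun k' _ => ?_
  refine Finset.sum_congr rfl fun p _ => ?_
  -- after normalising the phases, splitting them into single-monomial phases makes both sides
  -- the same product
  simp only [pcoef, dweight, tv, Int.cast_neg]
  ring_nf
  simp only [e2_add, e2_sub, e2_neg]
  ring_nf

lemma sum_sum_norm_sq_Rmat (N m n m' n' : ℕ) (r rj : ℝ × ℝ) :
    ∑ l, ∑ l', ‖Rmat N m n m' n' r rj l l'‖ ^ 2
      = Lr N ^ 2 * ∑ k, ∑ k', ‖Rcoef N m n m' n' r rj k k'‖ ^ 2 := by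
  simp_rw [Rmat_apply_eq_dft2]
  exact sum_sum_norm_sq_dft2 N _

lemma norm_Rcoef_le (N m n m' n' : ℕ) (r rj : ℝ × ℝ) (k k' : Idx N) :
    ‖Rcoef N m n m' n' r rj k k'‖
      ≤ (Lr N * Tnum N ^ 2)⁻¹ * (3 * (2 * Real.pi * N) ^ (m + m')) *
        ‖corr N (n + n') (r.2 - rj.2) k k'‖ := by
  have hL := Lr_pos N
  have hLT : ‖((Lr N : ℂ) * (Tnum N : ℂ) ^ 2)⁻¹‖ = (Lr N * Tnum N ^ 2)⁻¹ := by
    rw [← Complex.ofReal_pow, ← Complex.ofReal_mul, norm_inv, Complex.norm_real,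
      Real.norm_of_nonneg (by positivity)]
  have hA : ‖dweight N m' k * e2 (-(tv N k * r.1))‖ ≤ (2 * Real.pi * N) ^ m' := by
    rw [norm_mul, norm_e2, mul_one]
    exact norm_dweight_le N m' k
  have hB : ‖(gcoef N (toZ N k') : ℂ) * dweight N m k' * e2 (tv N k' * rj.1)‖
      ≤ 3 * (2 * Real.pi * N) ^ m := by
    rw [norm_mul, norm_mul, norm_e2, mul_one, Complex.norm_real, Real.norm_eq_abs]
    exact mul_le_mul (abs_gcoef_le N _) (norm_dweight_le N m k') (norm_nonneg _) (by norm_num)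
  calc ‖Rcoef N m n m' n' r rj k k'‖
      = (Lr N * Tnum N ^ 2)⁻¹ * (‖dweight N m' k * e2 (-(tv N k * r.1))‖ *
          ‖(gcoef N (toZ N k') : ℂ) * dweight N m k' * e2 (tv N k' * rj.1)‖) *
          ‖corr N (n + n') (r.2 - rj.2) k k'‖ := by
        rw [Rcoef, norm_mul, norm_mul, norm_mul, hLT, mul_assoc ((Lr N * Tnum N ^ 2)⁻¹)]
    _ ≤ (Lr N * Tnum N ^ 2)⁻¹ * ((2 * Real.pi * N) ^ m' * (3 * (2 * Real.pi * N) ^ m)) *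
          ‖corr N (n + n') (r.2 - rj.2) k k'‖ := by gcongr
    _ = _ := by ring

lemma sum_sum_norm_sq_Rcoef_le (N m n m' n' : ℕ) (r rj : ℝ × ℝ) :
    ∑ k, ∑ k', ‖Rcoef N m n m' n' r rj k k'‖ ^ 2
      ≤ ((Lr N * Tnum N ^ 2)⁻¹ * (3 * (2 * Real.pi * N) ^ (m + m'))) ^ 2 *
        (Lr N ^ 3 * (3 * (2 * Real.pi * N) ^ (n + n')) ^ 2) := by
  set c := (Lr N * Tnum N ^ 2)⁻¹ * (3 * (2 * Real.pi * N) ^ (m + m'))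
  have hL := (Lr_pos N).le
  calc ∑ k, ∑ k', ‖Rcoef N m n m' n' r rj k k'‖ ^ 2
      ≤ ∑ k, ∑ k', c ^ 2 * ‖corr N (n + n') (r.2 - rj.2) k k'‖ ^ 2 := by
        gcongr with k _ k' _
        rw [← mul_pow]
        gcongr
        exact norm_Rcoef_le N m n m' n' r rj k k'
    _ = c ^ 2 * ∑ _k : Idx N, Lr N * ∑ p, ‖pcoef N (n + n') (r.2 - rj.2) p‖ ^ 2 := by
        rw [Finset.mul_sum]
        refine Finset.sum_congr rfl fun k _ => ?_
        rw [← sum_norm_sq_corr N _ _ k, Finset.mul_sum]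
    _ ≤ c ^ 2 * ∑ _k : Idx N, Lr N * ∑ _p : Idx N, (3 * (2 * Real.pi * N) ^ (n + n')) ^ 2 := by
        gcongr
        exact norm_pcoef_le N _ _ _
    _ = c ^ 2 * (Lr N ^ 3 * (3 * (2 * Real.pi * N) ^ (n + n')) ^ 2) := by
        simp only [Finset.sum_const, Finset.card_univ, nsmul_eq_mul, card_Idx]
        ring

lemma sum_sum_norm_sq_Rmat_le (N m n m' n' : ℕ) (r rj : ℝ × ℝ) :
    ∑ l, ∑ l', ‖Rmat N m n m' n' r rj l l'‖ ^ 2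
      ≤ 81 * Lr N ^ 3 / Tnum N ^ 4 * ((2 * Real.pi * N) ^ (m + m' + n + n')) ^ 2 := by
  have hL := Lr_pos N
  have hT := Tnum_pos N
  rw [sum_sum_norm_sq_Rmat]
  calc Lr N ^ 2 * ∑ k, ∑ k', ‖Rcoef N m n m' n' r rj k k'‖ ^ 2
      ≤ Lr N ^ 2 * (((Lr N * Tnum N ^ 2)⁻¹ * (3 * (2 * Real.pi * N) ^ (m + m'))) ^ 2 *
        (Lr N ^ 3 * (3 * (2 * Real.pi * N) ^ (n + n')) ^ 2)) := by
        gcongr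
        exact sum_sum_norm_sq_Rcoef_le N m n m' n' r rj
    _ = _ := by
        rw [show m + m' + n + n' = (m + m') + (n + n') by ring, pow_add]
        field_simp
        ring

/-- **Lemma 3**: Frobenius-norm bound on the deterministic matrix `R^{(m',n')}_{(m,n)}`. -/
theorem Rmat_frobenius_bound :
    ∃ Cs2 : ℝ, 0 < Cs2 ∧
      ∀ (N : ℕ) (r rj : ℝ × ℝ) (m m' n n' : ℕ),
        0 < N → r ∈ box → rj ∈ box → m ≤ 1 → m' ≤ 1 → n ≤ 1 → n' ≤ 1 →
        frobNorm (Rmat N m n m' n' r rj) ≤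
          Cs2 / Real.sqrt (Lr N) * (2 * Real.pi * N) ^ (m + m' + n + n') := by
  refine ⟨144, by norm_num, fun N r rj m m' n n' _ _ _ _ _ _ _ => ?_⟩
  have hL := Lr_pos N
  have hT := Tnum_pos N
  have hL4 : Lr N ^ 4 ≤ 256 * Tnum N ^ 4 := by
    calc Lr N ^ 4 ≤ (4 * Tnum N) ^ 4 := by gcongr; exact Lr_le_four_mul_Tnum N
      _ = 256 * Tnum N ^ 4 := by ring
  have hconst : 81 * Lr N ^ 3 / Tnum N ^ 4 ≤ 144 ^ 2 / Lr N := by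
    rw [div_le_div_iff₀ (by positivity) hL]
    nlinarith
  rw [frobNorm, Real.sqrt_le_left (by positivity), mul_pow, div_pow, Real.sq_sqrt hL.le]
  calc _ ≤ 81 * Lr N ^ 3 / Tnum N ^ 4 * ((2 * Real.pi * N) ^ (m + m' + n + n')) ^ 2 :=
        sum_sum_norm_sq_Rmat_le N m n m' n' r rj
    _ ≤ _ := by gcongr

end Blind2D
end
end

section
/- For every p ∈ {−N,…,N}, all pairs (τ_j, f_j) ∈ ℝ², all c_j ∈ ℂ and h_j ∈ ℂ^K (j = 1,…,R), and any family of vectors d_l ∈ ℂ^K that is L-periodic in l, the following identity holds: Σ_{j=1}^R c_j·(1/L)·Σ_{k,l=−N}^{N} d_l^H h_j·e^{i2πk(p−l)/L}·e^{i2π(p f_j − k τ_j)} = Σ_{j=1}^R c_j·Σ_{k,l=−N}^{N} D_N(k/L − f_j)·D_N(l/L − τ_j)·d_{p−l}^H h_j·e^{i2πpk/L}. -/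
open MeasureTheory ProbabilityTheory Matrix

noncomputable section

/-! `toZ` identifies `Idx N` with `ZMod L`, so both sides are finite Fourier sums on `ℤ/Lℤ`.
Sampled on the grid `k/L`, the Dirichlet kernel reproduces the exponential:
`∑_k D_N(k/L - f) e^{i2πpk/L} = e^{i2πpf}` by orthogonality of the characters of `ZMod L`.
This collapses the `k`-sum on the right. The `l`-sum on the left matches the remaining
right-hand sum once it is reindexed by `l ↦ p - l`, which is legitimate because `d` is
`L`-periodic. -/

namespace Blind2D

lemma e2_one : e2 1 = 1 := by
  rw [e2, Complex.ofReal_one, mul_one, mul_comm, Complex.exp_two_pi_mul_I]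

lemma e2_periodic : Function.Periodic e2 1 := fun x => by
  rw [e2_add, e2_one, mul_one]

lemma e2_intCast_div (N : ℕ) (m : ℤ) :
    e2 (m / Lr N) = ZMod.stdAddChar (m : ZMod (2 * N + 1)) := by
  rw [ZMod.stdAddChar_coe, e2, Lr]
  push_cast
  ring_nf

lemma toZ_intCast_injective (N : ℕ) :
    Function.Injective fun i : Idx N => (toZ N i : ZMod (2 * N + 1)) := by
  intro i j hij
  have hdvd : ((2 * N + 1 : ℕ) : ℤ) ∣ toZ N i - toZ N j := by
    rw [← ZMod.intCast_zmod_eq_zero_iff_dvd, Int.cast_sub, sub_eq_zero]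
    exact hij
  have hlt : |toZ N i - toZ N j| < ((2 * N + 1 : ℕ) : ℤ) := by
    have := i.isLt
    have := j.isLt
    rw [abs_lt]
    simp only [toZ]
    omega
  have := Int.eq_zero_of_abs_lt_dvd hdvd hlt
  simp only [toZ] at this
  exact Fin.ext (by omega)

lemma toZ_intCast_bijective (N : ℕ) :
    Function.Bijective fun i : Idx N => (toZ N i : ZMod (2 * N + 1)) :=
  (Fintype.bijective_iff_injective_and_card _).mpr
    ⟨toZ_intCast_injective N, by simp⟩

lemma sum_toZ_intCast {M : Type*} [AddCommMonoid M] (N : ℕ) (F : ZMod (2 * N + 1) → M) :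
    ∑ i : Idx N, F (toZ N i) = ∑ x, F x :=
  (toZ_intCast_bijective N).sum_comp F

lemma tv_rev (N : ℕ) (i : Idx N) : tv N i.rev = -tv N i := by
  rw [tv, tv, ← Int.cast_neg]
  congr 1
  simp only [toZ, Fin.val_rev]
  omega

lemma sum_e2_tv_mul_sub (N : ℕ) (r s : Idx N) :
    ∑ k : Idx N, e2 (tv N k * (tv N r - tv N s) / Lr N) = if r = s then (Lr N : ℂ) else 0 := by
  have hψ : ∀ k : Idx N, e2 (tv N k * (tv N r - tv N s) / Lr N)
      = ZMod.stdAddChar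
          ((toZ N k : ZMod (2 * N + 1)) * ((toZ N r - toZ N s : ℤ) : ZMod (2 * N + 1))) := by
    intro k
    rw [← Int.cast_mul, ← e2_intCast_div]
    push_cast [tv]
    rfl
  rw [Finset.sum_congr rfl fun k _ => hψ k, sum_toZ_intCast N (fun x => ZMod.stdAddChar (x * _)),
    AddChar.sum_mulShift _ (ZMod.isPrimitive_stdAddChar _), Int.cast_sub]
  simp only [sub_eq_zero, (toZ_intCast_injective N).eq_iff, ZMod.card, Lr]
  split_ifs <;> push_cast <;> rfl

lemma sum_periodic_sub_toZ {M : Type*} [AddCommMonoid M] (N : ℕ) {g : ℤ → M}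
    (hg : Function.Periodic g (2 * N + 1 : ℤ)) (c : ℤ) :
    ∑ i : Idx N, g (c - toZ N i) = ∑ i : Idx N, g (toZ N i) := by
  set G : ZMod (2 * N + 1) → M := fun x => g (x.cast : ℤ)
  have hG : ∀ n : ℤ, g n = G n := fun n => by
    simp only [G, ZMod.coe_intCast, Int.emod_def]
    exact (hg.sub_int_mul_eq (n / (2 * N + 1 : ℕ))).symm.trans (by push_cast; ring_nf)
  simp_rw [hG, Int.cast_sub, sum_toZ_intCast N G, sum_toZ_intCast N (fun x => G (c - x))]
  exact Fintype.sum_equiv (Equiv.subLeft (c : ZMod (2 * N + 1))) _ _ fun _ => rfl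

lemma dirichlet_eq_sum (N : ℕ) (t : ℝ) :
    dirichlet N t = (Lr N : ℂ)⁻¹ * ∑ r : Idx N, e2 (t * tv N r) := by
  simp only [dirichlet, dirichletD, pow_zero, one_mul]

lemma sum_dirichlet_mul_e2 (N : ℕ) (p : Idx N) (f : ℝ) :
    ∑ k : Idx N, dirichlet N (tv N k / Lr N - f) * e2 (tv N p * tv N k / Lr N)
      = e2 (tv N p * f) := by
  have hsplit : ∀ k r : Idx N, e2 ((tv N k / Lr N - f) * tv N r) * e2 (tv N p * tv N k / Lr N)
      = e2 (-(f * tv N r)) * e2 (tv N k * (tv N r - tv N p.rev) / Lr N) := fun k r => by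
    rw [← e2_add, ← e2_add, tv_rev]
    ring_nf
  calc ∑ k : Idx N, dirichlet N (tv N k / Lr N - f) * e2 (tv N p * tv N k / Lr N)
      = (Lr N : ℂ)⁻¹ * ∑ r : Idx N, e2 (-(f * tv N r))
          * ∑ k : Idx N, e2 (tv N k * (tv N r - tv N p.rev) / Lr N) := by
        simp_rw [dirichlet_eq_sum, mul_assoc, Finset.sum_mul, hsplit, Finset.mul_sum]
        exact Finset.sum_comm
    _ = e2 (tv N p * f) := by
        simp_rw [sum_e2_tv_mul_sub, mul_ite, mul_zero, Finset.sum_ite_eq', Finset.mem_univ,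
          if_true, tv_rev]
        rw [mul_left_comm, inv_mul_cancel₀ (Complex.ofReal_ne_zero.mpr (Lr_pos N).ne'),
          mul_one, mul_neg, neg_neg, mul_comm]

lemma sum_periodic_mul_e2_reindex (N : ℕ) {a : ℤ → ℂ}
    (ha : Function.Periodic a (2 * N + 1 : ℤ))
    (p k : Idx N) :
    ∑ l : Idx N, a (toZ N l) * e2 (tv N k * (tv N p - tv N l) / Lr N)
      = ∑ l : Idx N, a (toZ N p - toZ N l) * e2 (tv N k * tv N l / Lr N) := by
  set g : ℤ → ℂ := fun n => a n * e2 (tv N k * (tv N p - n) / Lr N)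
  have hg : Function.Periodic g (2 * N + 1 : ℤ) := fun n => by
    have harg : tv N k * (tv N p - ((n + (2 * N + 1 : ℤ) : ℤ) : ℝ)) / Lr N
        = tv N k * (tv N p - n) / Lr N - toZ N k * 1 := by
      rw [tv, Lr]
      push_cast
      field_simp
      ring
    simp only [g, ha n, harg, e2_periodic.sub_int_mul_eq]
  refine (sum_periodic_sub_toZ N hg (toZ N p)).symm.trans (Finset.sum_congr rfl fun l _ => ?_)
  simp only [g, tv, Int.cast_sub, sub_sub_cancel]

lemma sampled_model_term_eq (N : ℕ) {a : ℤ → ℂ} (ha : Function.Periodic a (2 * N + 1 : ℤ))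
    (p : Idx N) (τ f : ℝ) :
    (Lr N : ℂ)⁻¹ * ∑ k : Idx N, ∑ l : Idx N,
        a (toZ N l) * e2 (tv N k * (tv N p - tv N l) / Lr N) * e2 (tv N p * f - tv N k * τ)
      = ∑ k : Idx N, ∑ l : Idx N,
          dirichlet N (tv N k / Lr N - f) * dirichlet N (tv N l / Lr N - τ)
            * a (toZ N p - toZ N l) * e2 (tv N p * tv N k / Lr N) := by
  set S := ∑ l : Idx N, dirichlet N (tv N l / Lr N - τ) * a (toZ N p - toZ N l)
  have hS : S = (Lr N : ℂ)⁻¹ * ∑ k : Idx N, e2 (-(τ * tv N k))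
      * ∑ l : Idx N, a (toZ N p - toZ N l) * e2 (tv N k * tv N l / Lr N) := by
    simp_rw [S, dirichlet_eq_sum, mul_assoc, Finset.sum_mul, Finset.mul_sum]
    rw [Finset.sum_comm]
    refine Finset.sum_congr rfl fun k _ => Finset.sum_congr rfl fun l _ => ?_
    rw [show (tv N l / Lr N - τ) * tv N k = -(τ * tv N k) + tv N k * tv N l / Lr N by ring,
      e2_add]
    ring
  calc (Lr N : ℂ)⁻¹ * ∑ k : Idx N, ∑ l : Idx N,
        a (toZ N l) * e2 (tv N k * (tv N p - tv N l) / Lr N) * e2 (tv N p * f - tv N k * τ)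
      = e2 (tv N p * f) * S := by
        simp_rw [← Finset.sum_mul, sum_periodic_mul_e2_reindex N ha, hS, Finset.mul_sum,
          Finset.sum_mul]
        refine Finset.sum_congr rfl fun k _ => ?_
        rw [Finset.mul_sum]
        refine Finset.sum_congr rfl fun l _ => ?_
        rw [show tv N p * f - tv N k * τ = tv N p * f + -(τ * tv N k) by ring, e2_add]
        ring
    _ = (∑ k : Idx N, dirichlet N (tv N k / Lr N - f) * e2 (tv N p * tv N k / Lr N)) * S := by
        rw [sum_dirichlet_mul_e2]
    _ = _ := by
        rw [Finset.sum_mul_sum]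
        refine Finset.sum_congr rfl fun k _ => Finset.sum_congr rfl fun l _ => ?_
        ring

/-- **Appendix A**: equivalence of the two expressions (2) and (3) for the sampled
model. -/
theorem sampled_model_identity
    (N K R : ℕ) (d : ℤ → Fin K → ℂ) (hper : Periodic N d)
    (p : Idx N) (τ f : Fin R → ℝ) (c : Fin R → ℂ) (h : Fin R → Fin K → ℂ) :
    ∑ j : Fin R, c j * ((Lr N : ℂ)⁻¹ * ∑ k : Idx N, ∑ l : Idx N,
        (∑ a : Fin K, star (d (toZ N l) a) * h j a) *
          e2 (tv N k * (tv N p - tv N l) / Lr N) *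
          e2 (tv N p * f j - tv N k * τ j)) =
      ∑ j : Fin R, c j * ∑ k : Idx N, ∑ l : Idx N,
        dirichlet N (tv N k / Lr N - f j) * dirichlet N (tv N l / Lr N - τ j) *
          (∑ a : Fin K, star (d (toZ N p - toZ N l) a) * h j a) *
          e2 (tv N p * tv N k / Lr N) := by
  refine Finset.sum_congr rfl fun j _ => congrArg (c j * ·) ?_
  have hperiodic : Function.Periodic (fun n => ∑ a : Fin K, star (d n a) * h j a)
      (2 * N + 1 : ℤ) := fun n => by
    simp only [hper n]
  exact sampled_model_term_eq N hperiodic p (τ j) (f j)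

end Blind2D
end
end
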